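/- Suppose I×_{β,f}^{♦,≪}H and I×_{β',f'}^{♦,≪}H are both linear cycle sets giving extensions of H by I, with h♦(y≪h'), h♦β(h',h'') and h♦f(h',h'') in Z(I) for all h,h',h'' ∈ H and y ∈ I (and likewise with β' and f' in place of β and f). If these two extensions are equivalent via the map (y,h) ↦ (y+φ(h),h) for some φ : H → I, then φ takes its values in Z(I). -/
import Mathlib


open scoped Classical

/-- A linear cycle set structure on an additive abelian group. -/
structure LCS (A : Type*) [AddCommGroup A] where
  dot : A → A → A
  bij : ∀ a, Function.Bijective (dot a)
  dot_add : ∀ a b c, dot a (b + c) = dot a b + dot a c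
  add_dot : ∀ a b c, dot (a + b) c = dot (dot a b) (dot a c)

/-- The sum of the extension `I ×_β H`. -/
def addP {I H : Type*} [AddCommGroup I] [AddCommGroup H] (β : H → H → I)
    (p q : I × H) : I × H :=
  (p.1 + q.1 + β p.2 q.2, p.2 + q.2)

/-- The cycle operation of `I ×_{β,f}^{♦,≪} H`. -/
def dotP {I H : Type*} [AddCommGroup I] [AddCommGroup H] (cI : LCS I) (cH : LCS H)
    (d : H → I → I) (yl : I → H → I) (f : H → H → I) (p q : I × H) : I × H :=
  (cI.dot (d p.2 p.1) (d p.2 q.1) + cI.dot (d p.2 p.1) (f p.2 q.2)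
      + yl (d p.2 p.1) (cH.dot p.2 q.2),
    cH.dot p.2 q.2)


private lemma LCS.dot_zero {A : Type*} [AddCommGroup A] (c : LCS A) (a : A) :
    c.dot a 0 = 0 := by
  have h := c.dot_add a 0 0
  rw [add_zero] at h
  exact (left_eq_add.mp h)

private lemma LCS.zero_dot {A : Type*} [AddCommGroup A] (c : LCS A) (a : A) :
    c.dot 0 a = a := by
  have h := c.add_dot 0 0 a
  rw [add_zero, c.dot_zero 0] at h
  exact ((c.bij 0).1 h.symm)

/-- If the extensions `I ×_{β,f}^{♦,≪} H` and `I ×_{β',f'}^{♦,≪} H` (with central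
cocycles) are equivalent via `(y,h) ↦ (y + φ h, h)`, then `φ` takes its values in
the center `Z(I)`. -/
theorem statement13 {I H : Type*} [AddCommGroup I] [AddCommGroup H]
    (cI : LCS I) (cH : LCS H) (β β' : H → H → I)
    (hβ1 : ∀ h h' h'', β h h' + β (h + h') h'' = β h' h'' + β h (h' + h''))
    (hβ2 : ∀ h, β h 0 = 0 ∧ β 0 h = 0)
    (hβ3 : ∀ h h', β h h' = β h' h)
    (hβ'1 : ∀ h h' h'', β' h h' + β' (h + h') h'' = β' h' h'' + β' h (h' + h''))
    (hβ'2 : ∀ h, β' h 0 = 0 ∧ β' 0 h = 0)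
    (hβ'3 : ∀ h h', β' h h' = β' h' h)
    (d : H → I → I) (yl : I → H → I) (f f' : H → H → I)
    (hd1 : ∀ h y y', d h (y + y') = d h y + d h y') (hd2 : ∀ y, d 0 y = y)
    (hyl1 : ∀ h, yl 0 h = 0) (hyl2 : ∀ y, yl y 0 = 0)
    (hf : ∀ h, f h 0 = 0 ∧ f 0 h = 0)
    (hf' : ∀ h, f' h 0 = 0 ∧ f' 0 h = 0)
    -- centrality hypotheses:
    (hc1 : ∀ (h h' : H) (y : I) (a : I),
      cI.dot (d h (yl y h')) a = a ∧ cI.dot a (d h (yl y h')) = d h (yl y h'))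
    (hc2 : ∀ (h h' h'' : H) (a : I),
      cI.dot (d h (β h' h'')) a = a ∧ cI.dot a (d h (β h' h'')) = d h (β h' h''))
    (hc3 : ∀ (h h' h'' : H) (a : I),
      cI.dot (d h (f h' h'')) a = a ∧ cI.dot a (d h (f h' h'')) = d h (f h' h''))
    (hc2' : ∀ (h h' h'' : H) (a : I),
      cI.dot (d h (β' h' h'')) a = a ∧ cI.dot a (d h (β' h' h'')) = d h (β' h' h''))
    (hc3' : ∀ (h h' h'' : H) (a : I),
      cI.dot (d h (f' h' h'')) a = a ∧ cI.dot a (d h (f' h' h'')) = d h (f' h' h''))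
    -- both structures are linear cycle sets:
    (hlcs : (∀ p : I × H, Function.Bijective (dotP cI cH d yl f p)) ∧
      (∀ a b c : I × H,
        dotP cI cH d yl f a (addP β b c) =
          addP β (dotP cI cH d yl f a b) (dotP cI cH d yl f a c)) ∧
      (∀ a b c : I × H,
        dotP cI cH d yl f (addP β a b) c =
          dotP cI cH d yl f (dotP cI cH d yl f a b) (dotP cI cH d yl f a c)))
    (hlcs' : (∀ p : I × H, Function.Bijective (dotP cI cH d yl f' p)) ∧
      (∀ a b c : I × H,
        dotP cI cH d yl f' a (addP β' b c) =
          addP β' (dotP cI cH d yl f' a b) (dotP cI cH d yl f' a c)) ∧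
      (∀ a b c : I × H,
        dotP cI cH d yl f' (addP β' a b) c =
          dotP cI cH d yl f' (dotP cI cH d yl f' a b)
            (dotP cI cH d yl f' a c)))
    (φ : H → I)
    -- `(y,h) ↦ (y + φ h, h)` is an equivalence of extensions:
    (hΦadd : ∀ p q : I × H,
      ((addP β p q).1 + φ (addP β p q).2, (addP β p q).2) =
        addP β' (p.1 + φ p.2, p.2) (q.1 + φ q.2, q.2))
    (hΦdot : ∀ p q : I × H,
      ((dotP cI cH d yl f p q).1 + φ (dotP cI cH d yl f p q).2,
          (dotP cI cH d yl f p q).2) =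
        dotP cI cH d yl f' (p.1 + φ p.2, p.2) (q.1 + φ q.2, q.2)) :
    ∀ (h : H) (a : I), cI.dot (φ h) a = a ∧ cI.dot a (φ h) = φ h := by
  have dh0 : ∀ h : H, d h 0 = 0 := by
    intro h
    have := hd1 h 0 0
    rw [add_zero] at this
    exact (left_eq_add.mp this)
  have φ0 : φ 0 = 0 := by
    have h := congrArg Prod.fst (hΦadd (0, 0) (0, 0))
    simp [addP, (hβ2 0).1, (hβ'2 0).1] at h
    exact h
  -- right-centrality of values of φ
  have rc : ∀ (h : H) (a : I), cI.dot a (φ h) = φ h := by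
    intro h a
    have hh := congrArg Prod.fst (hΦdot (a, 0) (0, h))
    simp [dotP, hd2, φ0, cI.dot_zero, cH.zero_dot, (hf h).2, (hf' h).2] at hh
    rw [add_comm (yl a h) (φ h)] at hh
    exact (add_right_cancel hh).symm
  -- d h is injective
  have injd : ∀ h : H, Function.Injective (d h) := by
    intro h a b hab
    have key := (hlcs.1 (0, h)).1 (a₁ := (a, 0)) (a₂ := (b, 0)) ?_
    · exact congrArg Prod.fst key
    · simp [dotP, dh0, cI.zero_dot, cH.dot_zero, (hf h).1, cI.dot_zero, hyl1, hab]
  -- d h is surjective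
  have surjd : ∀ h : H, Function.Surjective (d h) := by
    intro h z
    obtain ⟨⟨y', h'⟩, hq⟩ := (hlcs.1 (0, h)).2 (z, 0)
    have h2 : cH.dot h h' = 0 := congrArg Prod.snd hq
    have h'0 : h' = 0 := (cH.bij h).1 (by rw [h2, cH.dot_zero])
    subst h'0
    refine ⟨y', ?_⟩
    have h1 := congrArg Prod.fst hq
    simpa [dotP, dh0, cI.zero_dot, cH.dot_zero, (hf h).1, cI.dot_zero, hyl1, hyl2] using h1
  -- d h is a morphism for the dot of cI
  have homd : ∀ (h : H) (y y' : I), d h (cI.dot y y') = cI.dot (d h y) (d h y') := by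
    intro h y y'
    have hh := congrArg Prod.fst (hlcs.2.2 (y, 0) (0, h) (y', 0))
    simp [dotP, addP, hd2, (hβ2 h).2, cI.dot_zero, cH.zero_dot, cH.dot_zero,
      (hf h).1, (hf h).2, (hf 0).1, hyl1, hyl2, (hc1 h h y _).1] at hh
    exact hh.symm
  -- d h (φ h) acts trivially on the left
  have diag : ∀ (h : H) (a : I), cI.dot (d h (φ h)) a = a := by
    intro h a
    obtain ⟨y', rfl⟩ := surjd h a
    have hh := congrArg Prod.fst (hΦdot (0, h) (y', 0))
    simp [dotP, dh0, φ0, cI.zero_dot, cI.dot_zero, cH.dot_zero, (hf h).1, (hf' h).1,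
      hyl1, hyl2] at hh
    exact hh.symm
  -- conclusion
  intro h a
  refine ⟨?_, rc h a⟩
  apply injd h
  rw [homd h (φ h) a, diag h (d h a)]
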